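/- (Lemma 3.2) Suppose (A,b) is symplectic with b_i ≠ 0 for all i, and at a point y ∈ ℝ^n the matrix I_{sn} − h·Ā·F(y) is invertible. Then det(Dφ_h(y)) = 1 if and only if the VP condition holds for (A; F_1,…,F_s) with F_i = Dg(k_i(y)), i.e. det(I_{sn} − h·M(A;F)) = det(exp(h·K))·det(I_{sn} + h·M(Aᵀ;F)). -/

import Mathlib

open Matrix

/-- The Jacobian matrix of a map `f : ℝ^ι → ℝ^ι` at a point `y`. -/
noncomputable def jac {ι : Type*} [Fintype ι] [DecidableEq ι]
    (f : (ι → ℝ) → (ι → ℝ)) (y : ι → ℝ) : Matrix ι ι ℝ :=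
  LinearMap.toMatrix' ((fderiv ℝ f y).toLinearMap)

/-- The block matrix `M(A;F)` whose `(i,j)` block is `a_{ij}·exp((c_i−c_j)·h·K)·F_j`. -/
noncomputable def Mblk {n s : ℕ} (h : ℝ) (K : Matrix (Fin n) (Fin n) ℝ) (c : Fin s → ℝ)
    (A : Matrix (Fin s) (Fin s) ℝ) (F : Fin s → Matrix (Fin n) (Fin n) ℝ) :
    Matrix (Fin s × Fin n) (Fin s × Fin n) ℝ :=
  fun p q => A p.1 q.1 * (NormedSpace.exp (((c p.1 - c q.1) * h) • K) * F q.1) p.2 q.2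

/-- A Runge–Kutta pair `(A, b)` is symplectic. -/
def IsSymplecticRK {s : ℕ} (A : Matrix (Fin s) (Fin s) ℝ) (b : Fin s → ℝ) : Prop :=
  ∀ i j, b i * A i j + b j * A j i - b i * b j = 0

/-!
Differentiating the stage equations gives `W J = E` with `W = 1 - h M(A;F)`, `J` the stacked stage
Jacobians and `E` the stacked blocks `exp(c_i h K)`, and `Dφ = P + B J` with `P = exp(h K)`. Hence
`det Dφ * det W = det P * det (W + E P⁻¹ B)`, and `E P⁻¹ B = h M(𝟙 bᵀ;F)` because the exponentials
combine to `exp((c_i - c_j) h K)`. Symplecticity, in matrix form `diag(b) A + Aᵀ diag(b) = b bᵀ`,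
says precisely that `diag(b)` conjugates `W + h M(𝟙 bᵀ;F)` into `1 + h M(Aᵀ;F)`, so
`det Dφ * det W = det P * det (1 + h M(Aᵀ;F))`.
-/

theorem jac_eq_of_affine_comp {ι κ : Type*} [Fintype ι] [DecidableEq ι] [Fintype κ]
    {f g : (ι → ℝ) → (ι → ℝ)} {u : κ → (ι → ℝ) → (ι → ℝ)} {P : Matrix ι ι ℝ}
    {Q : κ → Matrix ι ι ℝ} {h : ℝ} {y : ι → ℝ}
    (hf : ∀ z, f z = P *ᵥ z + h • ∑ j, Q j *ᵥ g (u j z))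
    (hg : ∀ j, DifferentiableAt ℝ g (u j y)) (hu : ∀ j, DifferentiableAt ℝ (u j) y) :
    jac f y = P + h • ∑ j, Q j * (jac g (u j y) * jac (u j) y) := by
  have hderiv : HasFDerivAt f (P.mulVecLin.toContinuousLinearMap + h • ∑ j,
      (Q j).mulVecLin.toContinuousLinearMap ∘L (fderiv ℝ g (u j y) ∘L fderiv ℝ (u j) y)) y := by
    rw [show f = _ from funext hf]
    refine P.mulVecLin.toContinuousLinearMap.hasFDerivAt.add
      ((HasFDerivAt.fun_sum fun j _ => ?_).const_smul h)
    exact (Q j).mulVecLin.toContinuousLinearMap.hasFDerivAt.comp y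
      ((hg j).hasFDerivAt.comp y (hu j).hasFDerivAt)
  simp [jac, hderiv.fderiv, LinearMap.toMatrix'_comp, ← Matrix.toLin'_apply']

section BlockVector

variable {ι m n R : Type*} [CommRing R]

def blockCol (J : ι → Matrix m n R) : Matrix (ι × m) n R := of fun p q => J p.1 p.2 q

def blockRow (B : ι → Matrix n m R) : Matrix n (ι × m) R := of fun x p => B p.1 x p.2

theorem blockRow_mul_blockCol [Fintype ι] [Fintype m] {l : Type*} (B : ι → Matrix l m R)
    (J : ι → Matrix m n R) :
    blockRow B * blockCol J = ∑ i, B i * J i := by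
  ext x q
  simp [blockRow, blockCol, Matrix.mul_apply, Matrix.sum_apply, Fintype.sum_prod_type]

theorem blockCol_mul_blockRow [Fintype n] {l : Type*} (E : ι → Matrix m n R)
    (B : ι → Matrix n l R) :
    blockCol E * blockRow B = of fun p q => (E p.1 * B q.1) p.2 q.2 := by
  ext p q
  simp [blockRow, blockCol, Matrix.mul_apply]

theorem blockCol_mul [Fintype n] {l : Type*} (E : ι → Matrix m n R) (P : Matrix n l R) :
    blockCol E * P = blockCol fun i => E i * P := by
  ext p q
  simp [blockCol, Matrix.mul_apply]

end BlockVector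

theorem det_add_mul_inv_mul_mul_det {m n R : Type*} [Fintype m] [DecidableEq m] [Fintype n]
    [DecidableEq n] [CommRing R] {P : Matrix n n R} {W : Matrix m m R} (hP : IsUnit P.det)
    (hW : IsUnit W.det) (E : Matrix m n R) (B : Matrix n m R) :
    (P + B * (W⁻¹ * E)).det * W.det = P.det * (W + E * (P⁻¹ * B)).det := by
  have hcomm := det_one_add_mul_comm (W⁻¹ * E) (P⁻¹ * B)
  simp only [← Matrix.mul_assoc] at hcomm
  rw [det_add_mul _ _ hP, det_add_mul _ _ hW, hcomm]
  ring

theorem exp_smul_mul_exp_smul {m : Type*} [Fintype m] [DecidableEq m] (K : Matrix m m ℝ)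
    (a b : ℝ) :
    NormedSpace.exp (a • K) * NormedSpace.exp (b • K) = NormedSpace.exp ((a + b) • K) := by
  rw [add_smul, Matrix.exp_add_of_commute _ _ (((Commute.refl K).smul_left a).smul_right b)]

theorem inv_exp_smul {m : Type*} [Fintype m] [DecidableEq m] (K : Matrix m m ℝ) (a : ℝ) :
    (NormedSpace.exp (a • K))⁻¹ = NormedSpace.exp ((-a) • K) := by
  rw [← Matrix.exp_neg, neg_smul]

section Mblk

variable {n s : ℕ} (h : ℝ) (K : Matrix (Fin n) (Fin n) ℝ) (c : Fin s → ℝ)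
  (F : Fin s → Matrix (Fin n) (Fin n) ℝ)

theorem Mblk_sub (A A' : Matrix (Fin s) (Fin s) ℝ) :
    Mblk h K c A F - Mblk h K c A' F = Mblk h K c (A - A') F := by
  ext p q
  simp [Mblk, sub_mul]

theorem diagonal_mul_Mblk (d : Fin s → ℝ) (A : Matrix (Fin s) (Fin s) ℝ) :
    diagonal (fun p : Fin s × Fin n => d p.1) * Mblk h K c A F =
      Mblk h K c (diagonal d * A) F := by
  ext p q
  simp [Mblk, diagonal_mul, mul_assoc]

theorem Mblk_mul_diagonal (A : Matrix (Fin s) (Fin s) ℝ) (d : Fin s → ℝ) :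
    Mblk h K c A F * diagonal (fun p : Fin s × Fin n => d p.1) =
      Mblk h K c (A * diagonal d) F := by
  ext p q
  simp only [mul_diagonal, Mblk]
  ring

theorem Mblk_mul_blockCol (A : Matrix (Fin s) (Fin s) ℝ)
    (J : Fin s → Matrix (Fin n) (Fin n) ℝ) :
    Mblk h K c A F * blockCol J = blockCol fun i =>
      ∑ j, (A i j • NormedSpace.exp (((c i - c j) * h) • K)) * (F j * J j) := by
  ext p q
  simp only [Mblk, blockCol, Matrix.mul_apply, Matrix.sum_apply, Fintype.sum_prod_type, of_apply,
    Matrix.smul_apply, smul_eq_mul, Finset.mul_sum, Finset.sum_mul, mul_assoc]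
  exact Finset.sum_congr rfl fun j _ => Finset.sum_comm

end Mblk

theorem IsSymplecticRK.diagonal_mul_add_transpose_mul {s : ℕ} {A : Matrix (Fin s) (Fin s) ℝ}
    {b : Fin s → ℝ} (hA : IsSymplecticRK A b) :
    diagonal b * A + Aᵀ * diagonal b = vecMulVec b b := by
  ext i j
  simp only [Matrix.add_apply, diagonal_mul, mul_diagonal, transpose_apply, vecMulVec_apply]
  linear_combination hA i j

section Integrator

variable {n s : ℕ} {h : ℝ} {K : Matrix (Fin n) (Fin n) ℝ} {c : Fin s → ℝ}
  {F : Fin s → Matrix (Fin n) (Fin n) ℝ}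

theorem one_sub_smul_Mblk_mul_blockCol {A : Matrix (Fin s) (Fin s) ℝ}
    {E J : Fin s → Matrix (Fin n) (Fin n) ℝ}
    (hJ : ∀ i, J i =
      E i + h • ∑ j, (A i j • NormedSpace.exp (((c i - c j) * h) • K)) * (F j * J j)) :
    (1 - h • Mblk h K c A F) * blockCol J = blockCol E := by
  rw [Matrix.sub_mul, Matrix.one_mul, Matrix.smul_mul, Mblk_mul_blockCol]
  ext p q
  simp [blockCol, hJ p.1]

theorem blockCol_exp_mul_inv_mul_blockRow (b : Fin s → ℝ) :
    blockCol (fun i => NormedSpace.exp ((c i * h) • K)) * ((NormedSpace.exp (h • K))⁻¹ *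
      blockRow fun j => h • ((b j • NormedSpace.exp (((1 - c j) * h) • K)) * F j)) =
      h • Mblk h K c (vecMulVec 1 b) F := by
  have hblock : ∀ i j, NormedSpace.exp ((c i * h) • K) * NormedSpace.exp ((-h) • K) *
      (h • ((b j • NormedSpace.exp (((1 - c j) * h) • K)) * F j)) =
      (h * b j) • (NormedSpace.exp (((c i - c j) * h) • K) * F j) := by
    intro i j
    rw [exp_smul_mul_exp_smul, Matrix.mul_smul, smul_mul_assoc, Matrix.mul_smul,
      ← Matrix.mul_assoc, exp_smul_mul_exp_smul, smul_smul,
      show c i * h + -h + (1 - c j) * h = (c i - c j) * h by ring]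
  rw [← Matrix.mul_assoc, blockCol_mul, blockCol_mul_blockRow, inv_exp_smul]
  ext p q
  simp only [of_apply, hblock, Matrix.smul_apply, Mblk, vecMulVec_apply, Pi.one_apply, one_mul,
    smul_eq_mul, mul_assoc]

theorem IsSymplecticRK.det_one_sub_smul_Mblk_add {A : Matrix (Fin s) (Fin s) ℝ} {b : Fin s → ℝ}
    (hA : IsSymplecticRK A b) (hb : ∀ i, b i ≠ 0) :
    (1 - h • Mblk h K c A F + h • Mblk h K c (vecMulVec 1 b) F).det =
      (1 + h • Mblk h K c Aᵀ F).det := by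
  set D := diagonal fun p : Fin s × Fin n => b p.1
  have hD : D.det ≠ 0 := by
    simpa [D, det_diagonal, Finset.prod_ne_zero_iff] using fun i _ => hb i
  have hconj : D * (1 - h • Mblk h K c A F + h • Mblk h K c (vecMulVec 1 b) F) =
      (1 + h • Mblk h K c Aᵀ F) * D := by
    have hbb : diagonal b * vecMulVec 1 b - diagonal b * A = Aᵀ * diagonal b := by
      have hdb : diagonal b * vecMulVec 1 b = vecMulVec b b := by
        ext i j
        simp [diagonal_mul, vecMulVec_apply]
      rw [sub_eq_iff_eq_add', hdb, hA.diagonal_mul_add_transpose_mul]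
    rw [Matrix.mul_add, Matrix.mul_sub, Matrix.mul_one, Matrix.mul_smul, Matrix.mul_smul,
      diagonal_mul_Mblk, diagonal_mul_Mblk, Matrix.add_mul, Matrix.one_mul, Matrix.smul_mul,
      Mblk_mul_diagonal, ← hbb, ← Mblk_sub, smul_sub]
    abel
  have := congrArg det hconj
  rw [det_mul, det_mul, mul_comm (det _) D.det] at this
  exact mul_left_cancel₀ hD this

end Integrator

theorem stmt_2 (n s : ℕ) (h : ℝ) (K : Matrix (Fin n) (Fin n) ℝ) (c : Fin s → ℝ)
    (g : (Fin n → ℝ) → (Fin n → ℝ)) (hg : Differentiable ℝ g)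
    (A : Matrix (Fin s) (Fin s) ℝ) (b : Fin s → ℝ)
    (hsymp : IsSymplecticRK A b) (hb : ∀ i, b i ≠ 0)
    (k : Fin s → (Fin n → ℝ) → (Fin n → ℝ))
    (hk : ∀ i, Differentiable ℝ (k i))
    (hkdef : ∀ i y, k i y =
      (NormedSpace.exp ((c i * h) • K)).mulVec y +
        h • ∑ j, (A i j • NormedSpace.exp (((c i - c j) * h) • K)).mulVec (g (k j y)))
    (φ : (Fin n → ℝ) → (Fin n → ℝ))
    (hφ : ∀ y, φ y =
      (NormedSpace.exp (h • K)).mulVec y +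
        h • ∑ i, (b i • NormedSpace.exp (((1 - c i) * h) • K)).mulVec (g (k i y)))
    (y : Fin n → ℝ)
    (hinv : IsUnit ((1 : Matrix (Fin s × Fin n) (Fin s × Fin n) ℝ) -
      h • Mblk h K c A (fun j => jac g (k j y)))) :
    (jac φ y).det = 1 ↔
      ((1 : Matrix (Fin s × Fin n) (Fin s × Fin n) ℝ) -
          h • Mblk h K c A (fun j => jac g (k j y))).det =
        (NormedSpace.exp (h • K)).det *
          ((1 : Matrix (Fin s × Fin n) (Fin s × Fin n) ℝ) +
            h • Mblk h K c Aᵀ (fun j => jac g (k j y))).det := by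
  set F := fun j => jac g (k j y)
  set J := fun i => jac (k i) y
  set W := (1 : Matrix (Fin s × Fin n) (Fin s × Fin n) ℝ) - h • Mblk h K c A F
  have hW : IsUnit W.det := (isUnit_iff_isUnit_det W).mp hinv
  have hP : IsUnit (NormedSpace.exp (h • K)).det :=
    (isUnit_iff_isUnit_det _).mp (Matrix.isUnit_exp (h • K))
  have hstages : W * blockCol J = blockCol fun i => NormedSpace.exp ((c i * h) • K) :=
    one_sub_smul_Mblk_mul_blockCol fun i =>
      jac_eq_of_affine_comp (hkdef i) (fun j => hg _) (fun j => hk j y)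
  have hupdate : jac φ y = NormedSpace.exp (h • K) + blockRow (fun i =>
      h • ((b i • NormedSpace.exp (((1 - c i) * h) • K)) * F i)) * blockCol J := by
    rw [jac_eq_of_affine_comp (hφ ·) (fun i => hg _) (fun i => hk i y), blockRow_mul_blockCol,
      Finset.smul_sum]
    simp only [smul_mul, Matrix.mul_assoc, F, J]
  have hdet : (jac φ y).det * W.det =
      (NormedSpace.exp (h • K)).det * (1 + h • Mblk h K c Aᵀ F).det := by
    have hJ : blockCol J = W⁻¹ * blockCol fun i => NormedSpace.exp ((c i * h) • K) := by
      rw [← hstages, Matrix.nonsing_inv_mul_cancel_left _ _ hW]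
    rw [hupdate, hJ, det_add_mul_inv_mul_mul_det hP hW,
      blockCol_exp_mul_inv_mul_blockRow, hsymp.det_one_sub_smul_Mblk_add hb]
  rw [← hdet, eq_comm (a := W.det), mul_eq_right₀ hW.ne_zero]
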